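/- Let z = x + iy ∈ D (the standard fundamental domain, so |x| ≤ 1/2 and x² + y² ≥ 1), realized as z = i·g for the upper triangular matrix g = [[a, b],[0, 1/a]] ∈ SL₂(ℝ). Then for every nonzero integer vector (m, n), the squared Euclidean norm of g·(m,n)ᵗ satisfies (ma + nb)² + n²/a² ≥ a². -/

import Mathlib

/-!
Write `x = b/a` and `y = 1/a²`, so `z = x + iy` lies in the standard fundamental domain. Scaling by
`a²` turns the claim into `|m + n z|² = (m + n x)² + (n y)² ≥ 1`. Expanding, this is
`m² + 2mnx + n²|z|²`, and `|x| ≤ 1/2`, `|z| ≥ 1` bound it below by `m² - |mn| + n²`, which is a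
positive integer when `(m, n) ≠ 0`.
-/

theorem Int.one_le_sq_sub_abs_mul_add_sq (m n : ℤ) (hmn : ¬(m = 0 ∧ n = 0)) :
    1 ≤ m ^ 2 - |m * n| + n ^ 2 := by
  have hsq : m ^ 2 - |m * n| + n ^ 2 = (|m| - |n|) ^ 2 + |m| * |n| := by
    rw [abs_mul]; nlinarith [sq_abs m, sq_abs n]
  rw [hsq]
  by_cases hm : m = 0
  · have hn : n ≠ 0 := fun hn => hmn ⟨hm, hn⟩
    simp only [hm, abs_zero, zero_sub, neg_sq, zero_mul, add_zero]
    exact one_le_pow₀ (Int.one_le_abs hn)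
  by_cases hn : n = 0
  · simp only [hn, abs_zero, sub_zero, mul_zero, add_zero]
    exact one_le_pow₀ (Int.one_le_abs hm)
  nlinarith [sq_nonneg (|m| - |n|), Int.one_le_abs hm, Int.one_le_abs hn]

theorem sq_sub_abs_mul_add_sq_le {K : Type*} [Field K] [LinearOrder K] [IsStrictOrderedRing K]
    {x y : K} (hx : |x| ≤ 1 / 2) (hxy : 1 ≤ x ^ 2 + y ^ 2) (m n : K) :
    m ^ 2 - |m * n| + n ^ 2 ≤ (m + n * x) ^ 2 + (n * y) ^ 2 := by
  have hcross : -|m * n| ≤ 2 * (m * n) * x := by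
    have : |2 * (m * n) * x| ≤ |m * n| := by
      rw [abs_mul, abs_mul, abs_two]
      nlinarith [abs_nonneg (m * n)]
    linarith [neg_abs_le (2 * (m * n) * x)]
  have hn : n ^ 2 ≤ n ^ 2 * (x ^ 2 + y ^ 2) := le_mul_of_one_le_right (sq_nonneg n) hxy
  nlinarith

theorem norm_sq_ge_of_fundamental_domain (a b : ℝ) (ha : a ≠ 0)
    (hD1 : |b / a| ≤ 1 / 2) (hD2 : 1 ≤ b ^ 2 / a ^ 2 + 1 / a ^ 4)
    (m n : ℤ) (hmn : ¬(m = 0 ∧ n = 0)) :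
    a ^ 2 ≤ (m * a + n * b) ^ 2 + (n : ℝ) ^ 2 / a ^ 2 := by
  have hz : 1 ≤ (b / a) ^ 2 + (1 / a ^ 2) ^ 2 := by
    convert hD2 using 2 <;> ring
  have hscale : (m * a + n * b) ^ 2 + (n : ℝ) ^ 2 / a ^ 2
      = a ^ 2 * ((m + n * (b / a)) ^ 2 + (n * (1 / a ^ 2)) ^ 2) := by
    field_simp
  have hint : (1 : ℝ) ≤ (m : ℝ) ^ 2 - |(m : ℝ) * n| + (n : ℝ) ^ 2 := by
    exact_mod_cast Int.one_le_sq_sub_abs_mul_add_sq m n hmn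
  rw [hscale]
  exact le_mul_of_one_le_right (sq_nonneg a)
    (hint.trans (sq_sub_abs_mul_add_sq_le hD1 hz (m : ℝ) n))
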